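/- The Artin group of type E₈ admits a presentation with three generators σ₁, σ, ω and relations: σ₁σⁱσ₁σ⁻ⁱ = σⁱσ₁σ⁻ⁱσ₁ for i = 2, 3, 4; σ⁸ = (σσ₁)⁷; ωσⁱσ₁σ⁻ⁱ = σⁱσ₁σ⁻ⁱω for i = 0, 1, 3, 4, 5, 6; ωσ²σ₁σ⁻²ω = σ²σ₁σ⁻²ωσ²σ₁σ⁻². That is, this presented group is isomorphic to the Artin group of type E₈. -/

import Mathlib

/-!
Write `Aᵢ = σⁱ σ₁ σ⁻ⁱ`. For any group elements, `(x c)ᵏ = (∏_{i<k} cⁱ x c⁻ⁱ) cᵏ`, so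
`σ⁸ = (σσ₁)⁷` is equivalent to `σ = A₀A₁⋯A₆`. In the Artin group the Coxeter element
`c = s₁⋯s₇` conjugates `sᵢ` to `sᵢ₊₁`, so there `sᵢ₊₁ = cⁱ s₁ c⁻ⁱ` and the three-generator
relations hold for `σ₁ = s₁, σ = c, ω = t`. Conversely, in the three-generator group
`σ⁸ = (σσ₁)⁷` makes `σ⁸` commute with `σ₁`, so `i ↦ Aᵢ` is `8`-periodic and the relations
for `i = 2, 3, 4` give `Aᵢ Aⱼ = Aⱼ Aᵢ` whenever `2 ≤ j - i ≤ 6`; pushing `A₁ σ = σ A₀` through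
`σ = A₀A₁(A₂⋯A₆)` gives the braid relation `A₀A₁A₀ = A₁A₀A₁`. Hence `sᵢ₊₁ ↦ Aᵢ, t ↦ ω`
inverts `σ₁ ↦ s₁, σ ↦ c, ω ↦ t`.
-/

namespace TypeE8

open FreeGroup in
/-- Relators of the standard Artin presentation of type `E₈`: `Sum.inl i` is `s_{i+1}`
(`i : Fin 7`, the chain), `Sum.inr ()` is `t`, attached to the third node `s₃`. -/
inductive IsE8Rel : FreeGroup (Fin 7 ⊕ Unit) → Prop
  | comm_ss (i j : Fin 7) (h : (i : ℕ) + 1 < j) :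
      IsE8Rel (of (.inl i) * of (.inl j) * (of (.inl j) * of (.inl i))⁻¹)
  | braid_s (i : ℕ) (h : i + 1 < 7) :
      IsE8Rel (of (.inl ⟨i, by omega⟩) * of (.inl ⟨i + 1, h⟩) * of (.inl ⟨i, by omega⟩) *
        (of (.inl ⟨i + 1, h⟩) * of (.inl ⟨i, by omega⟩) * of (.inl ⟨i + 1, h⟩))⁻¹)
  | comm_t (i : Fin 7) (h : (i : ℕ) ≠ 2) :
      IsE8Rel (of (.inr ()) * of (.inl i) * (of (.inl i) * of (.inr ()))⁻¹)
  | braid_t :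
      IsE8Rel (of (.inr ()) * of (.inl 2) * of (.inr ()) *
        (of (.inl 2) * of (.inr ()) * of (.inl 2))⁻¹)

open FreeGroup in
/-- Relators of the three-generator presentation of the Artin group of type `E₈`:
generator `0` is `σ₁`, generator `1` is `σ`, generator `2` is `ω`. -/
inductive IsE8ThreeRel : FreeGroup (Fin 3) → Prop
  | r₁ (i : ℕ) (h : i = 2 ∨ i = 3 ∨ i = 4) :
      IsE8ThreeRel (of 0 * of 1 ^ i * of 0 * (of 1 ^ i)⁻¹ *
        (of 1 ^ i * of 0 * (of 1 ^ i)⁻¹ * of 0)⁻¹)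
  | r₂ : IsE8ThreeRel (of 1 ^ 8 * ((of 1 * of 0) ^ 7)⁻¹)
  | r₃ (i : ℕ) (h : i = 0 ∨ i = 1 ∨ i = 3 ∨ i = 4 ∨ i = 5 ∨ i = 6) :
      IsE8ThreeRel (of 2 * (of 1 ^ i * of 0 * (of 1 ^ i)⁻¹) *
        (of 1 ^ i * of 0 * (of 1 ^ i)⁻¹ * of 2)⁻¹)
  | r₄ : IsE8ThreeRel (of 2 * (of 1 ^ 2 * of 0 * (of 1 ^ 2)⁻¹) * of 2 *
      (of 1 ^ 2 * of 0 * (of 1 ^ 2)⁻¹ * of 2 * (of 1 ^ 2 * of 0 * (of 1 ^ 2)⁻¹))⁻¹)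

open MulAut

section ConjugatesByPowers

variable {G : Type*} [Group G]

theorem mul_pow_eq_prod_conj_mul_pow (a c : G) (k : ℕ) :
    (a * c) ^ k = ((List.range k).map fun i => conj (c ^ i) a).prod * c ^ k := by
  induction k with
  | zero => simp
  | succ k ih =>
    rw [pow_succ, ih, List.range_succ, List.map_append, List.prod_append]
    simp only [List.map_cons, List.map_nil, List.prod_cons, List.prod_nil, mul_one, conj_apply]
    group

theorem pow_succ_eq_mul_pow_iff (a c : G) (n : ℕ) :
    c ^ (n + 1) = (c * a) ^ n ↔ c = ((List.range n).map fun i => conj (c ^ i) a).prod := by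
  rw [← mul_left_inj c, mul_pow_mul, mul_pow_eq_prod_conj_mul_pow, pow_succ', mul_assoc,
    mul_left_cancel_iff, ← pow_succ, pow_succ', mul_right_cancel_iff]

theorem commute_pow_succ_of_pow_succ_eq_mul_pow {a c : G} {n : ℕ}
    (h : c ^ (n + 1) = (c * a) ^ n) : Commute a (c ^ (n + 1)) := by
  have hac : (a * c) ^ n = c ^ (n + 1) :=
    mul_left_cancel (a := c) (by rw [← mul_pow_mul, ← h, ← pow_succ, ← pow_succ'])
  calc a * c ^ (n + 1) = (a * c) ^ n * a := by rw [h, mul_pow_mul]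
    _ = c ^ (n + 1) * a := by rw [hac]

theorem conj_pow_add (a b : G) (i j : ℕ) :
    conj (b ^ (i + j)) a = conj (b ^ i) (conj (b ^ j) a) := by
  rw [pow_add, map_mul, MulAut.mul_apply]

theorem Commute.conj_pow_add {a b : G} {k : ℕ} (h : Commute a (conj (b ^ k) a)) (i : ℕ) :
    Commute (conj (b ^ i) a) (conj (b ^ (i + k)) a) := by
  rw [TypeE8.conj_pow_add]
  exact h.map (conj (b ^ i))

end ConjugatesByPowers

section BraidChain

variable {G : Type*} [Group G] {x : ℕ → G} {n : ℕ}

structure IsBraidChain (x : ℕ → G) (n : ℕ) : Prop where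
  braid : ∀ i, i + 1 < n → x i * x (i + 1) * x i = x (i + 1) * x i * x (i + 1)
  commute : ∀ i j, i + 1 < j → j < n → Commute (x i) (x j)

theorem IsBraidChain.mono {m : ℕ} (h : IsBraidChain x n) (hmn : m ≤ n) : IsBraidChain x m :=
  ⟨fun i hi => h.braid i (by omega), fun i j hij hj => h.commute i j hij (by omega)⟩

theorem IsBraidChain.prod_range_mul (h : IsBraidChain x n) {i : ℕ} (hi : i + 1 < n) :
    ((List.range n).map x).prod * x i = x (i + 1) * ((List.range n).map x).prod := by
  induction n with
  | zero => omega
  | succ n ih =>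
    simp only [List.range_succ, List.map_append, List.prod_append, List.map_cons, List.map_nil,
      List.prod_cons, List.prod_nil, mul_one]
    rcases Nat.lt_or_ge (i + 1) n with hin | hin
    · rw [mul_assoc, ← (h.commute i n hin (by omega)).eq, ← mul_assoc,
        ih (h.mono n.le_succ) hin, mul_assoc]
    · obtain rfl : n = i + 1 := by omega
      have hfar : Commute (x (i + 1)) ((List.range i).map x).prod :=
        Commute.list_prod_right _ _ fun y hy => by
          obtain ⟨j, hj, rfl⟩ := List.mem_map.mp hy
          exact (h.commute j (i + 1) (by simp at hj; omega) (by omega)).symm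
      simp only [List.range_succ, List.map_append, List.prod_append, List.map_cons, List.map_nil,
        List.prod_cons, List.prod_nil, mul_one]
      calc _ = ((List.range i).map x).prod * (x i * x (i + 1) * x i) := by group
        _ = x (i + 1) * (((List.range i).map x).prod * x i * x (i + 1)) := by
          rw [h.braid i hi, mul_assoc (x (i + 1)), ← mul_assoc, ← hfar.eq]; group

theorem IsBraidChain.conj_pow_prod_range (h : IsBraidChain x n) {i : ℕ} (hi : i < n) :
    conj (((List.range n).map x).prod ^ i) (x 0) = x i := by
  induction i with
  | zero => simp
  | succ i ih =>
    rw [pow_succ', map_mul, MulAut.mul_apply, ih (by omega), conj_apply,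
      h.prod_range_mul hi, mul_inv_cancel_right]

theorem IsBraidChain.pow_succ_prod_range (h : IsBraidChain x n) :
    ((List.range n).map x).prod ^ (n + 1) = (((List.range n).map x).prod * x 0) ^ n := by
  rw [pow_succ_eq_mul_pow_iff]
  refine congrArg List.prod (List.map_congr_left fun i hi => ?_)
  exact (h.conj_pow_prod_range (List.mem_range.mp hi)).symm

end BraidChain

section BraidChainOfPowerConjugates

variable {G : Type*} [Group G] {a b : G} {n : ℕ}

theorem conj_pow_succ_eq_self_of_pow_succ_eq_mul_pow (h : b ^ (n + 1) = (b * a) ^ n) :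
    conj (b ^ (n + 1)) a = a := by
  rw [conj_apply, ← (commute_pow_succ_of_pow_succ_eq_mul_pow h).eq, mul_inv_cancel_right]

theorem commute_conj_pow_sub_of_pow_succ_eq_mul_pow (h : b ^ (n + 1) = (b * a) ^ n) {k : ℕ}
    (hk : k ≤ n + 1) (hc : Commute a (conj (b ^ k) a)) :
    Commute a (conj (b ^ (n + 1 - k)) a) := by
  have := Commute.conj_pow_add hc (n + 1 - k)
  rw [Nat.sub_add_cancel hk, conj_pow_succ_eq_self_of_pow_succ_eq_mul_pow h] at this
  exact this.symm

theorem braid_of_pow_succ_eq_mul_pow (h : b ^ (n + 1) = (b * a) ^ n) (hn : 2 ≤ n)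
    (hcomm : ∀ k, 2 ≤ k → k < n → Commute a (conj (b ^ k) a)) :
    a * conj b a * a = conj b a * a * conj b a := by
  obtain ⟨m, rfl⟩ : ∃ m, n = m + 2 := ⟨n - 2, by omega⟩
  set R := ((List.range m).map fun i => conj (b ^ (i + 2)) a).prod
  have hR : Commute a R := Commute.list_prod_right _ _ fun y hy => by
    obtain ⟨k, hk, rfl⟩ := List.mem_map.mp hy
    exact hcomm (k + 2) (by omega) (by simp at hk; omega)
  have hb : b = a * conj b a * R := by
    rw [pow_succ_eq_mul_pow_iff, List.range_succ_eq_map, List.range_succ_eq_map] at h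
    simpa only [List.map_cons, List.map_map, List.prod_cons, pow_zero, zero_add, pow_one, map_one,
      MulAut.one_apply, Function.comp_def, Nat.succ_eq_add_one, add_assoc, one_add_one_eq_two,
      mul_assoc] using h
  have key : conj b a * (a * conj b a * R) = a * conj b a * R * a := by
    rw [← hb, conj_apply, inv_mul_cancel_right]
  rw [mul_assoc _ R, ← hR.eq, ← mul_assoc, ← mul_assoc, ← mul_assoc] at key
  exact (mul_right_cancel key).symm

theorem isBraidChain_conj_pow (h : b ^ (n + 1) = (b * a) ^ n) (hn : 2 ≤ n)
    (hcomm : ∀ k, 2 ≤ k → k < n → Commute a (conj (b ^ k) a)) :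
    IsBraidChain (fun i => conj (b ^ i) a) n where
  braid i _ := by
    simp only [conj_pow_add a b i 1, pow_one, ← map_mul, braid_of_pow_succ_eq_mul_pow h hn hcomm]
  commute i j hij hj := by
    have := Commute.conj_pow_add (hcomm (j - i) (by omega) (by omega)) i
    rwa [Nat.add_sub_cancel' (by omega : i ≤ j)] at this

end BraidChainOfPowerConjugates

abbrev ThreeGeneratorE8 := PresentedGroup {r | IsE8ThreeRel r}

abbrev ArtinE8 := PresentedGroup {r | IsE8Rel r}

local notation "σ₁" => (PresentedGroup.of 0 : ThreeGeneratorE8)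
local notation "σ" => (PresentedGroup.of 1 : ThreeGeneratorE8)
local notation "ω" => (PresentedGroup.of 2 : ThreeGeneratorE8)
local notation "t" => (PresentedGroup.of (Sum.inr ()) : ArtinE8)

theorem commute_σ₁_conj {i : ℕ} (hi : i = 2 ∨ i = 3 ∨ i = 4) :
    Commute σ₁ (conj (σ ^ i) σ₁) := by
  have := PresentedGroup.mk_eq_mk_of_mul_inv_mem (IsE8ThreeRel.r₁ i hi)
  simp only [map_mul, map_pow] at this
  rw [commute_iff_eq, conj_apply]
  simp only [← mul_assoc]
  exact this

theorem σ_pow_eight : σ ^ 8 = (σ * σ₁) ^ 7 := by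
  have := PresentedGroup.mk_eq_mk_of_mul_inv_mem IsE8ThreeRel.r₂
  simp only [map_mul, map_pow] at this
  exact this

theorem commute_ω_conj {i : ℕ} (hi : i = 0 ∨ i = 1 ∨ i = 3 ∨ i = 4 ∨ i = 5 ∨ i = 6) :
    Commute ω (conj (σ ^ i) σ₁) := by
  have := PresentedGroup.mk_eq_mk_of_mul_inv_mem (IsE8ThreeRel.r₃ i hi)
  simp only [map_mul, map_pow] at this
  exact this

theorem ω_braid : ω * conj (σ ^ 2) σ₁ * ω = conj (σ ^ 2) σ₁ * ω * conj (σ ^ 2) σ₁ := by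
  have := PresentedGroup.mk_eq_mk_of_mul_inv_mem IsE8ThreeRel.r₄
  simp only [map_mul, map_pow] at this
  exact this

theorem isBraidChain_conj_σ_pow : IsBraidChain (fun i => conj (σ ^ i) σ₁) 7 := by
  refine isBraidChain_conj_pow σ_pow_eight (by norm_num) fun k hk2 hk7 => ?_
  rcases Nat.lt_or_ge k 5 with hk5 | hk5
  · exact commute_σ₁_conj (by omega)
  · obtain ⟨j, rfl⟩ : ∃ j, k = 7 + 1 - j := ⟨8 - k, by omega⟩
    exact commute_conj_pow_sub_of_pow_succ_eq_mul_pow σ_pow_eight (by omega)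
      (commute_σ₁_conj (by omega))

-- `s i` is the paper's `sᵢ₊₁`; the index is read modulo `7`.
def s (i : ℕ) : ArtinE8 := .of (.inl (Fin.ofNat 7 i))

theorem s_of_lt {i : ℕ} (hi : i < 7) : s i = .of (.inl ⟨i, hi⟩) := by
  simp only [s, Fin.ofNat, Nat.mod_eq_of_lt hi]

theorem isBraidChain_s : IsBraidChain s 7 where
  braid i hi := by
    have := PresentedGroup.mk_eq_mk_of_mul_inv_mem (IsE8Rel.braid_s i hi)
    simp only [map_mul] at this
    rw [s_of_lt hi, s_of_lt (by omega : i < 7)]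
    exact this
  commute i j hij hj := by
    have := PresentedGroup.mk_eq_mk_of_mul_inv_mem (IsE8Rel.comm_ss ⟨i, by omega⟩ ⟨j, hj⟩ hij)
    simp only [map_mul] at this
    rw [s_of_lt hj, s_of_lt (by omega : i < 7), commute_iff_eq]
    exact this

theorem commute_t_s {i : ℕ} (hi : i < 7) (h2 : i ≠ 2) : Commute t (s i) := by
  have := PresentedGroup.mk_eq_mk_of_mul_inv_mem (IsE8Rel.comm_t ⟨i, hi⟩ h2)
  simp only [map_mul] at this
  rw [s_of_lt hi, commute_iff_eq]
  exact this

theorem t_braid : t * s 2 * t = s 2 * t * s 2 := by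
  have := PresentedGroup.mk_eq_mk_of_mul_inv_mem IsE8Rel.braid_t
  simp only [map_mul] at this
  exact this

def coxeterElement : ArtinE8 := ((List.range 7).map s).prod

theorem coxeterElement_eq_prod_ofFn :
    coxeterElement = (List.ofFn fun i : Fin 7 => (.of (.inl i) : ArtinE8)).prod :=
  rfl

theorem conj_coxeterElement_pow {i : ℕ} (hi : i < 7) : conj (coxeterElement ^ i) (s 0) = s i :=
  isBraidChain_s.conj_pow_prod_range hi

theorem coxeterElement_pow_eight : coxeterElement ^ 8 = (coxeterElement * s 0) ^ 7 :=
  isBraidChain_s.pow_succ_prod_range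

theorem lift_eq_one_of_isE8ThreeRel {r : FreeGroup (Fin 3)} (hr : IsE8ThreeRel r) :
    FreeGroup.lift ![s 0, coxeterElement, t] r = 1 := by
  rcases hr with ⟨i, hi⟩ | _ | ⟨i, hi⟩ | _ <;>
    simp only [map_mul, map_inv, map_pow, FreeGroup.lift_apply_of, mul_inv_eq_one,
      Matrix.cons_val_zero, Matrix.cons_val_one, Matrix.cons_val_two, Matrix.head_cons,
      Matrix.tail_cons]
  · have := isBraidChain_s.commute 0 i (by omega) (by omega)
    rw [← conj_coxeterElement_pow (i := i) (by omega), commute_iff_eq, conj_apply] at this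
    simpa only [mul_assoc] using this
  · exact coxeterElement_pow_eight
  · rw [← conj_apply, conj_coxeterElement_pow (by omega)]
    exact commute_t_s (by omega) (by omega)
  · rw [← conj_apply, conj_coxeterElement_pow (by omega)]
    exact t_braid

def toArtinE8 : ThreeGeneratorE8 →* ArtinE8 :=
  PresentedGroup.toGroup fun _ => lift_eq_one_of_isE8ThreeRel

theorem lift_eq_one_of_isE8Rel {r : FreeGroup (Fin 7 ⊕ Unit)} (hr : IsE8Rel r) :
    FreeGroup.lift (Sum.elim (fun i : Fin 7 => conj (σ ^ (i : ℕ)) σ₁) fun _ => ω) r = 1 := by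
  rcases hr with ⟨i, j, hij⟩ | ⟨i, hi⟩ | ⟨i, hi⟩ | _ <;>
    simp only [map_mul, map_inv, FreeGroup.lift_apply_of, mul_inv_eq_one, Sum.elim_inl,
      Sum.elim_inr]
  · exact isBraidChain_conj_σ_pow.commute i j hij j.isLt
  · exact isBraidChain_conj_σ_pow.braid i hi
  · exact commute_ω_conj (by omega)
  · exact ω_braid

def fromArtinE8 : ArtinE8 →* ThreeGeneratorE8 :=
  PresentedGroup.toGroup fun _ => lift_eq_one_of_isE8Rel

theorem fromArtinE8_of_inl (i : Fin 7) : fromArtinE8 (.of (.inl i)) = conj (σ ^ (i : ℕ)) σ₁ :=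
  PresentedGroup.toGroup.of _

theorem fromArtinE8_of_inr : fromArtinE8 t = ω :=
  PresentedGroup.toGroup.of _

theorem fromArtinE8_s {i : ℕ} (hi : i < 7) : fromArtinE8 (s i) = conj (σ ^ i) σ₁ := by
  rw [s_of_lt hi, fromArtinE8_of_inl]

theorem toArtinE8_of (x : Fin 3) : toArtinE8 (.of x) = ![s 0, coxeterElement, t] x :=
  PresentedGroup.toGroup.of _

theorem toArtinE8_conj (i : ℕ) :
    toArtinE8 (conj (σ ^ i) σ₁) = conj (coxeterElement ^ i) (s 0) := by
  rw [conj_apply, conj_apply, map_mul, map_mul, map_inv, map_pow, toArtinE8_of, toArtinE8_of]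
  rfl

theorem fromArtinE8_coxeterElement : fromArtinE8 coxeterElement = σ := by
  rw [coxeterElement, map_list_prod, List.map_map,
    (pow_succ_eq_mul_pow_iff σ₁ σ 7).mp σ_pow_eight]
  refine congrArg List.prod (List.map_congr_left fun i hi => ?_)
  exact fromArtinE8_s (List.mem_range.mp hi)

theorem fromArtinE8_comp_toArtinE8 : fromArtinE8.comp toArtinE8 = .id _ := by
  refine PresentedGroup.ext fun x => ?_
  simp only [MonoidHom.comp_apply, MonoidHom.id_apply, toArtinE8_of]
  fin_cases x
  · simp [fromArtinE8_s]
  · exact fromArtinE8_coxeterElement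
  · exact fromArtinE8_of_inr

theorem toArtinE8_comp_fromArtinE8 : toArtinE8.comp fromArtinE8 = .id _ := by
  refine PresentedGroup.ext fun x => ?_
  simp only [MonoidHom.comp_apply, MonoidHom.id_apply]
  rcases x with i | _
  · rw [fromArtinE8_of_inl, toArtinE8_conj, conj_coxeterElement_pow i.isLt, s_of_lt i.isLt]
  · rw [fromArtinE8_of_inr, toArtinE8_of]
    rfl

/-- The Artin group of type `E₈` has a presentation with three generators `σ₁, σ, ω`,
the isomorphism sending `σ₁ ↦ s₁`, `σ ↦ s₁s₂⋯s₇`, `ω ↦ t`. -/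
theorem three_generator_presentation_of_artin_E8 :
    ∃ e : PresentedGroup {r | IsE8ThreeRel r} ≃* PresentedGroup {r | IsE8Rel r},
      e (.of 0) = PresentedGroup.of (Sum.inl 0) ∧
      e (.of 2) = PresentedGroup.of (Sum.inr ()) ∧
      e (.of 1) = (List.ofFn (fun i : Fin 7 =>
        (PresentedGroup.of (Sum.inl i) : PresentedGroup {r | IsE8Rel r}))).prod := by
  exact ⟨toArtinE8.toMulEquiv fromArtinE8 fromArtinE8_comp_toArtinE8 toArtinE8_comp_fromArtinE8,
    toArtinE8_of 0, toArtinE8_of 2, (toArtinE8_of 1).trans coxeterElement_eq_prod_ofFn⟩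

end TypeE8
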